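/- In a Barr exact category C, let d = (d_⊤, d_⊥), c = (c_⊤, c_⊥) : f_R ⇉ f_E be a parallel pair of double extensions between regular epimorphisms f_R : R_⊤ → R_⊥ and f_E : E_⊤ → E_⊥, such that the pair (d_⊤, c_⊤) : R_⊤ ⇉ E_⊤ is the kernel pair of some morphism of C and the pair (d_⊥, c_⊥) : R_⊥ ⇉ E_⊥ is the kernel pair of some morphism of C. Then the coequalizer of d and c exists in Ext(C), it is a double extension, and it is computed componentwise: its two components are the coequalizers in C of (d_⊤, c_⊤) and of (d_⊥, c_⊥). -/

import Mathlib

open CategoryTheory CategoryTheory.Limits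

universe v u

namespace Paper

variable {C : Type u} [Category.{v} C]

/-- `f` is a regular epimorphism. -/
def IsRegEpi {X Y : C} (f : X ⟶ Y) : Prop := Nonempty (RegularEpi f)

/-- A regular category: a finitely complete category with coequalizers of kernel pairs in
which regular epimorphisms are stable under pullback. -/
class RegularCat (C : Type u) [Category.{v} C] [HasFiniteLimits C] : Prop where
  hasCoeqOfKernelPairs : ∀ {X Y : C} (f : X ⟶ Y),
    HasCoequalizer (pullback.fst f f) (pullback.snd f f)
  regEpiPullbackStable : ∀ {X Y Z : C} (f : X ⟶ Y) (g : Z ⟶ Y),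
    IsRegEpi f → IsRegEpi (pullback.snd f g)

/-- An internal equivalence relation given by a parallel pair `r₁ r₂ : R ⟶ X`. -/
structure IsEquivRel [HasFiniteLimits C] {R X : C} (r₁ r₂ : R ⟶ X) : Prop where
  jointlyMono : Mono (prod.lift r₁ r₂)
  refl : ∃ d : X ⟶ R, d ≫ r₁ = 𝟙 X ∧ d ≫ r₂ = 𝟙 X
  symm : ∃ s : R ⟶ R, s ≫ r₁ = r₂ ∧ s ≫ r₂ = r₁
  trans : ∃ t : pullback r₂ r₁ ⟶ R,
    t ≫ r₁ = pullback.fst r₂ r₁ ≫ r₁ ∧ t ≫ r₂ = pullback.snd r₂ r₁ ≫ r₂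

/-- A Barr exact category: a regular category in which every internal equivalence relation
is effective (i.e. is a kernel pair). -/
class BarrExact (C : Type u) [Category.{v} C] [HasFiniteLimits C] extends RegularCat C : Prop where
  equivRelEffective : ∀ {R X : C} (r₁ r₂ : R ⟶ X), IsEquivRel r₁ r₂ →
    ∃ (Y : C) (f : X ⟶ Y), IsKernelPair f r₁ r₂

section DoubleExt
variable [HasFiniteLimits C]

/-- A double extension: a commutative square `αt ≫ fB = fA ≫ αb` of regular epimorphisms
whose comparison morphism to the pullback is also a regular epimorphism. -/
structure IsDoubleExt {A₁ A₀ B₁ B₀ : C} (fA : A₁ ⟶ A₀) (fB : B₁ ⟶ B₀)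
    (αt : A₁ ⟶ B₁) (αb : A₀ ⟶ B₀) : Prop where
  w : αt ≫ fB = fA ≫ αb
  left : IsRegEpi fA
  right : IsRegEpi fB
  top : IsRegEpi αt
  bot : IsRegEpi αb
  comparison : IsRegEpi (pullback.lift fA αt w.symm : A₁ ⟶ pullback αb fB)

end DoubleExt

/-- The category `Ext C` of extensions: the full subcategory of the arrow category of `C`
determined by the regular epimorphisms. -/
abbrev ExtCat (C : Type u) [Category.{v} C] : Type max u v :=
  ObjectProperty.FullSubcategory (fun f : Arrow C => IsRegEpi f.hom)

/-- An object of `Ext C` from a regular epimorphism. -/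
def ExtCat.mk' {X Y : C} (f : X ⟶ Y) (hf : IsRegEpi f) : ExtCat C :=
  ⟨Arrow.mk f, hf⟩

/-- The top (domain) component of a morphism of `Ext C`. -/
def ExtCat.homLeft {f g : ExtCat C} (φ : f ⟶ g) : f.obj.left ⟶ g.obj.left :=
  CommaMorphism.left φ.hom

/-- The bottom (codomain) component of a morphism of `Ext C`. -/
def ExtCat.homRight {f g : ExtCat C} (φ : f ⟶ g) : f.obj.right ⟶ g.obj.right :=
  CommaMorphism.right φ.hom

lemma ExtCat.homLeft_comp {f g h : ExtCat C} (a : f ⟶ g) (b : g ⟶ h) :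
    ExtCat.homLeft (a ≫ b) = ExtCat.homLeft a ≫ ExtCat.homLeft b := rfl

lemma ExtCat.homRight_comp {f g h : ExtCat C} (a : f ⟶ g) (b : g ⟶ h) :
    ExtCat.homRight (a ≫ b) = ExtCat.homRight a ≫ ExtCat.homRight b := rfl

lemma ExtCat.hom_w {f g : ExtCat C} (φ : f ⟶ g) :
    ExtCat.homLeft φ ≫ g.obj.hom = f.obj.hom ≫ ExtCat.homRight φ :=
  CommaMorphism.w φ.hom

/-- A morphism of `Ext C` from a commutative square in `C`. -/
def ExtCat.homMk' {X₁ X₀ Y₁ Y₀ : C} {f : X₁ ⟶ X₀} {g : Y₁ ⟶ Y₀}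
    {hf : IsRegEpi f} {hg : IsRegEpi g}
    (u : X₁ ⟶ Y₁) (v : X₀ ⟶ Y₀) (w : u ≫ g = f ≫ v) :
    ExtCat.mk' f hf ⟶ ExtCat.mk' g hg :=
  ObjectProperty.homMk (Arrow.homMk (u := u) (v := v) w)

/-- A (commutative) square in `C`, with left vertical `left : A₁ ⟶ A₀`, right vertical
`right : B₁ ⟶ B₀`, top horizontal `top : A₁ ⟶ B₁` and bottom horizontal `bot : A₀ ⟶ B₀`. -/
structure Sq (C : Type u) [Category.{v} C] where
  A₁ : C
  A₀ : C
  B₁ : C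
  B₀ : C
  left : A₁ ⟶ A₀
  right : B₁ ⟶ B₀
  top : A₁ ⟶ B₁
  bot : A₀ ⟶ B₀
  w : top ≫ right = left ≫ bot

/-- The square is a double extension. -/
def Sq.IsDE [HasFiniteLimits C] (s : Sq C) : Prop :=
  IsDoubleExt s.left s.right s.top s.bot

/-- A commutative cube, presented as a morphism of squares `Φ : s ⟶ t`. -/
structure SqHom (s t : Sq C) where
  h₁₁ : s.A₁ ⟶ t.A₁
  h₁₀ : s.A₀ ⟶ t.A₀
  h₀₁ : s.B₁ ⟶ t.B₁
  h₀₀ : s.B₀ ⟶ t.B₀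
  wA : h₁₁ ≫ t.left = s.left ≫ h₁₀
  wB : h₀₁ ≫ t.right = s.right ≫ h₀₀
  wt : h₁₁ ≫ t.top = s.top ≫ h₀₁
  wb : h₁₀ ≫ t.bot = s.bot ≫ h₀₀

/-- Composition of cubes (as morphisms of squares). -/
def SqHom.comp {s t u : Sq C} (Φ : SqHom s t) (Ψ : SqHom t u) : SqHom s u where
  h₁₁ := Φ.h₁₁ ≫ Ψ.h₁₁
  h₁₀ := Φ.h₁₀ ≫ Ψ.h₁₀
  h₀₁ := Φ.h₀₁ ≫ Ψ.h₀₁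
  h₀₀ := Φ.h₀₀ ≫ Ψ.h₀₀
  wA := by rw [Category.assoc, Ψ.wA, ← Category.assoc, Φ.wA, Category.assoc]
  wB := by rw [Category.assoc, Ψ.wB, ← Category.assoc, Φ.wB, Category.assoc]
  wt := by rw [Category.assoc, Ψ.wt, ← Category.assoc, Φ.wt, Category.assoc]
  wb := by rw [Category.assoc, Ψ.wb, ← Category.assoc, Φ.wb, Category.assoc]

section Cube
variable [HasFiniteLimits C]

/-- Seen as a morphism `(σ, β) : s ⟶ t` between the double extensions `s` (as the arrow
`s.left → s.right`) and `t`, the face `σ` of the cube: the square from `s.left` to `t.left`. -/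
def SqHom.sigmaSq {s t : Sq C} (Φ : SqHom s t) : Sq C where
  A₁ := s.A₁
  A₀ := s.A₀
  B₁ := t.A₁
  B₀ := t.A₀
  left := s.left
  right := t.left
  top := Φ.h₁₁
  bot := Φ.h₁₀
  w := Φ.wA

/-- The face `β` of the cube: the square from `s.right` to `t.right`. -/
def SqHom.betaSq {s t : Sq C} (Φ : SqHom s t) : Sq C where
  A₁ := s.B₁
  A₀ := s.B₀
  B₁ := t.B₁
  B₀ := t.B₀
  left := s.right
  right := t.right
  top := Φ.h₀₁
  bot := Φ.h₀₀
  w := Φ.wB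

/-- Top component of the componentwise pullback of `t` (i.e. `α`) and `betaSq Φ` (i.e. `β`). -/
noncomputable def SqHom.P₁ {s t : Sq C} (Φ : SqHom s t) : C := pullback t.top Φ.h₀₁

/-- Bottom component of the componentwise pullback of `α` and `β`. -/
noncomputable def SqHom.P₀ {s t : Sq C} (Φ : SqHom s t) : C := pullback t.bot Φ.h₀₀

/-- The induced arrow between the components of the componentwise pullback of `α` and `β`. -/
noncomputable def SqHom.fP {s t : Sq C} (Φ : SqHom s t) : Φ.P₁ ⟶ Φ.P₀ :=
  pullback.map t.top Φ.h₀₁ t.bot Φ.h₀₀ t.left s.right t.right t.w Φ.wB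

/-- The top comparison morphism. -/
noncomputable def SqHom.c₁ {s t : Sq C} (Φ : SqHom s t) : s.A₁ ⟶ Φ.P₁ :=
  pullback.lift Φ.h₁₁ s.top Φ.wt

/-- The bottom comparison morphism. -/
noncomputable def SqHom.c₀ {s t : Sq C} (Φ : SqHom s t) : s.A₀ ⟶ Φ.P₀ :=
  pullback.lift Φ.h₁₀ s.bot Φ.wb

lemma SqHom.comp_w {s t : Sq C} (Φ : SqHom s t) : Φ.c₁ ≫ Φ.fP = s.left ≫ Φ.c₀ := by
  apply pullback.hom_ext
  · simp only [SqHom.c₁, SqHom.c₀, SqHom.fP, SqHom.P₁, SqHom.P₀, Category.assoc,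
      pullback.lift_fst, pullback.lift_fst_assoc, Φ.wA]
  · simp only [SqHom.c₁, SqHom.c₀, SqHom.fP, SqHom.P₁, SqHom.P₀, Category.assoc,
      pullback.lift_snd, pullback.lift_snd_assoc, s.w]

/-- The comparison square of the cube `Φ`, from `s.left` to the componentwise pullback
of `α` and `β`. -/
noncomputable def SqHom.compSq {s t : Sq C} (Φ : SqHom s t) : Sq C where
  A₁ := s.A₁
  A₀ := s.A₀
  B₁ := Φ.P₁
  B₀ := Φ.P₀
  left := s.left
  right := Φ.fP
  top := Φ.c₁
  bot := Φ.c₀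
  w := Φ.comp_w

/-- A `3`-cubical extension: the two opposite faces `γ = s` and `α = t`, the two connecting
faces `σ` and `β`, and the comparison square to the componentwise pullback of `α` and `β`
are all double extensions. -/
def SqHom.Is3CubExt {s t : Sq C} (Φ : SqHom s t) : Prop :=
  s.IsDE ∧ t.IsDE ∧ Φ.sigmaSq.IsDE ∧ Φ.betaSq.IsDE ∧ Φ.compSq.IsDE

end Cube

/-- The cube `Φ : s ⟶ t` is a limit cube: the cone from the initial vertex `s.A₁` on the
diagram formed by the remaining seven vertices is a limit cone. -/
def SqHom.IsLimitCube {s t : Sq C} (Φ : SqHom s t) : Prop :=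
  ∀ (W : C) (wA₀ : W ⟶ s.A₀) (wB₁ : W ⟶ s.B₁) (wtA₁ : W ⟶ t.A₁),
    wA₀ ≫ s.bot = wB₁ ≫ s.right →
    wA₀ ≫ Φ.h₁₀ = wtA₁ ≫ t.left →
    wB₁ ≫ Φ.h₀₁ = wtA₁ ≫ t.top →
    ∃! u : W ⟶ s.A₁, u ≫ s.left = wA₀ ∧ u ≫ s.top = wB₁ ∧ u ≫ Φ.h₁₁ = wtA₁

/-- A discrete fibration (of order 3): a `3`-cubical extension which is a limit cube. -/
def SqHom.IsDiscFib [HasFiniteLimits C] {s t : Sq C} (Φ : SqHom s t) : Prop :=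
  Φ.Is3CubExt ∧ Φ.IsLimitCube
section Galois
variable [HasFiniteLimits C]

/-- A strongly E-Birkhoff Galois structure on `C`: a full replete reflective subcategory
(given by the predicate `inB`, the reflector `F` and the unit `η`) such that every unit
component is a regular epimorphism and every naturality square of the unit at a regular
epimorphism is a double extension. -/
structure BirkhoffStructure (C : Type u) [Category.{v} C] [HasFiniteLimits C] where
  inB : C → Prop
  replete : ∀ {X Y : C}, inB X → (X ≅ Y) → inB Y
  F : C ⥤ C
  η : 𝟭 C ⟶ F
  obj_inB : ∀ A : C, inB (F.obj A)
  unit_regEpi : ∀ A : C, IsRegEpi (η.app A)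
  univ : ∀ {A X : C}, inB X → ∀ g : A ⟶ X, ∃! h : F.obj A ⟶ X, η.app A ≫ h = g
  stronglyBirkhoff : ∀ {A B : C} (f : A ⟶ B), IsRegEpi f →
    IsDoubleExt f (F.map f) (η.app A) (η.app B)

/-- A trivial covering: a regular epimorphism whose unit naturality square is a pullback. -/
def TrivialCovering (G : BirkhoffStructure C) {T E : C} (t : T ⟶ E) : Prop :=
  IsRegEpi t ∧ IsPullback (G.η.app T) t (G.F.map t) (G.η.app E)

/-- A covering: a regular epimorphism whose pullback along some regular epimorphism is a
trivial covering. -/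
def Covering (G : BirkhoffStructure C) {A B : C} (c : A ⟶ B) : Prop :=
  IsRegEpi c ∧ ∃ (E : C) (e : E ⟶ B), IsRegEpi e ∧ TrivialCovering G (pullback.snd c e)

end Galois

/-- The underlying square in `C` of a morphism of `Ext C`. -/
def sqOfHom {f g : ExtCat C} (φ : f ⟶ g) : Sq C where
  A₁ := f.obj.left
  A₀ := f.obj.right
  B₁ := g.obj.left
  B₀ := g.obj.right
  left := f.obj.hom
  right := g.obj.hom
  top := ExtCat.homLeft φ
  bot := ExtCat.homRight φ
  w := ExtCat.hom_w φ

/-- The underlying cube in `C` of a naturality square in `Ext C` of a natural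
transformation `η₁ : 𝟭 (Ext C) ⟶ F₁` at a morphism `φ : f ⟶ g` of `Ext C`. -/
def natCube (F₁ : ExtCat C ⥤ ExtCat C) (η₁ : 𝟭 (ExtCat C) ⟶ F₁) {f g : ExtCat C}
    (φ : f ⟶ g) : SqHom (sqOfHom φ) (sqOfHom (F₁.map φ)) where
  h₁₁ := ExtCat.homLeft (η₁.app f)
  h₁₀ := ExtCat.homRight (η₁.app f)
  h₀₁ := ExtCat.homLeft (η₁.app g)
  h₀₀ := ExtCat.homRight (η₁.app g)
  wA := ExtCat.hom_w (η₁.app f)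
  wB := ExtCat.hom_w (η₁.app g)
  wt := by
    have h := congrArg ExtCat.homLeft (η₁.naturality φ)
    rw [ExtCat.homLeft_comp, ExtCat.homLeft_comp] at h
    exact h.symm
  wb := by
    have h := congrArg ExtCat.homRight (η₁.naturality φ)
    rw [ExtCat.homRight_comp, ExtCat.homRight_comp] at h
    exact h.symm

section LevelOne
variable [HasFiniteLimits C]

/-- The level-one Galois structure induced by a strongly E-Birkhoff Galois structure `G`:
the coverings form a reflective subcategory of `Ext C`, with reflector `F₁` and unit `η₁`,
every unit component is a double extension, and the reflection is strongly E₂-Birkhoff. -/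
structure LevelOne (G : BirkhoffStructure C) where
  F₁ : ExtCat C ⥤ ExtCat C
  η₁ : 𝟭 (ExtCat C) ⟶ F₁
  obj_cov : ∀ f : ExtCat C, Covering G (F₁.obj f).obj.hom
  univ : ∀ {f x : ExtCat C}, Covering G x.obj.hom → ∀ g : f ⟶ x,
    ∃! h : F₁.obj f ⟶ x, η₁.app f ≫ h = g
  unit_DE : ∀ f : ExtCat C, (sqOfHom (η₁.app f)).IsDE
  stronglyBirkhoff : ∀ {f g : ExtCat C} (φ : f ⟶ g), (sqOfHom φ).IsDE →
    (natCube F₁ η₁ φ).Is3CubExt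

/-- A trivial double covering: a morphism of `Ext C` whose underlying square is a double
extension and whose `η₁`-naturality square is a pullback in `Ext C`. -/
def TrivDoubleCov {G : BirkhoffStructure C} (L : LevelOne G) {f g : ExtCat C}
    (φ : f ⟶ g) : Prop :=
  (sqOfHom φ).IsDE ∧ IsPullback (L.η₁.app f) φ (L.F₁.map φ) (L.η₁.app g)

/-- A double covering: a double extension `α : d ⟶ c` in `Ext C` such that the pullback of
`α` along some double extension `γ : e ⟶ c` is a trivial double covering. -/
def DoubleCov {G : BirkhoffStructure C} (L : LevelOne G) {d c : ExtCat C}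
    (α : d ⟶ c) : Prop :=
  (sqOfHom α).IsDE ∧ ∃ (e : ExtCat C) (γ : e ⟶ c), (sqOfHom γ).IsDE ∧
    ∃ (p : ExtCat C) (pγ : p ⟶ e) (pα : p ⟶ d),
      IsPullback pγ pα γ α ∧ TrivDoubleCov L pγ

end LevelOne

/-! The coequalizers `q₁ : E₁ ⟶ Q₁` and `q₀ : E₀ ⟶ Q₀` of the two kernel pairs exist and are
regular epimorphisms with kernel pairs `(d_⊤, c_⊤)` and `(d_⊥, c_⊥)`; `f_E` descends to
`f_Q : Q₁ ⟶ Q₀`, and the universal property in `Ext C` follows from the two componentwise ones.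
The substance is that the comparison `E₁ ⟶ E₀ ×_{Q₀} Q₁` is a regular epimorphism. Argue with
generalized elements, passing to regular epimorphic covers: a point `(x, y)` lifts to `e` with
`q₁ e = y`; then `q₀ x = q₀ (f_E e)`, so `(x, f_E e) = (d_⊥ r, c_⊥ r)` for some `r`; as `c` is a
double extension, `(r, e) = (f_R ρ, c_⊤ ρ)` for some `ρ`, and `d_⊤ ρ` is sent to `(x, y)`. -/

section Regularity

theorem isRegEpi_iff_isRegularEpi {X Y : C} (f : X ⟶ Y) : IsRegEpi f ↔ IsRegularEpi f :=
  ⟨fun h => ⟨h⟩, fun h => h.regularEpi⟩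

variable [HasFiniteLimits C] [RegularCat C]

theorem RegularCat.hasCoequalizer_of_isKernelPair {X Y Z : C} {f : X ⟶ Y} {a b : Z ⟶ X}
    (hk : IsKernelPair f a b) : HasCoequalizer a b :=
  have := RegularCat.hasCoeqOfKernelPairs f
  hasColimit_of_iso (F := parallelPair (pullback.fst f f) (pullback.snd f f))
    (parallelPair.ext hk.isoPullback (Iso.refl _) (by simp) (by simp))

theorem RegularCat.regular : Regular C where
  hasCoequalizer_of_isKernelPair := RegularCat.hasCoequalizer_of_isKernelPair
  regularEpiIsStableUnderBaseChange := .mk' fun _ _ _ f g _ hg => by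
    rw [← pullbackSymmetry_hom_comp_snd,
      MorphismProperty.cancel_left_of_respectsIso (.regularEpi C),
      MorphismProperty.regularEpi_iff, ← isRegEpi_iff_isRegularEpi]
    exact RegularCat.regEpiPullbackStable g f ((isRegEpi_iff_isRegularEpi g).2 hg)

theorem IsRegEpi.comp {X Y Z : C} {f : X ⟶ Y} {g : Y ⟶ Z} (hf : IsRegEpi f) (hg : IsRegEpi g) :
    IsRegEpi (f ≫ g) := by
  have := RegularCat.regular (C := C)
  rw [isRegEpi_iff_isRegularEpi] at *
  infer_instance

theorem IsRegEpi.of_comp {X Y Z : C} (f : X ⟶ Y) {g : Y ⟶ Z} (h : IsRegEpi (f ≫ g)) :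
    IsRegEpi g := by
  have := RegularCat.regular (C := C)
  rw [isRegEpi_iff_isRegularEpi] at *
  have := strongEpi_of_strongEpi f g
  infer_instance

theorem IsRegEpi.exists_cover {X Y T : C} {e : X ⟶ Y} (he : IsRegEpi e) (y : T ⟶ Y) :
    ∃ (W : C) (p : W ⟶ T) (x : W ⟶ X), IsRegEpi p ∧ x ≫ e = p ≫ y :=
  ⟨_, pullback.snd e y, pullback.fst e y, RegularCat.regEpiPullbackStable e y he,
    pullback.condition⟩

end Regularity

theorem IsKernelPair.of_isColimit_cofork {R X Y Q : C} {a b : R ⟶ X} {q : X ⟶ Y} {π : X ⟶ Q}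
    (hk : IsKernelPair q a b) (w : a ≫ π = b ≫ π) (hπ : IsColimit (Cofork.ofπ π w)) :
    IsKernelPair π a b := by
  obtain ⟨m, hm⟩ := Cofork.IsColimit.desc' hπ q hk.w
  exact IsKernelPair.cancel_right w (hm ▸ hk)

section Comparison

variable [HasFiniteLimits C] [RegularCat C]
  {R₁ R₀ E₁ E₀ Q₁ Q₀ : C} {fR : R₁ ⟶ R₀} {fE : E₁ ⟶ E₀} {fQ : Q₁ ⟶ Q₀}
  {dt ct : R₁ ⟶ E₁} {db cb : R₀ ⟶ E₀} {q₁ : E₁ ⟶ Q₁} {q₀ : E₀ ⟶ Q₀}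

theorem isRegEpi_comparison_of_isKernelPair (hd : dt ≫ fE = fR ≫ db)
    (hc : IsDoubleExt fR fE ct cb) (hq₁ : IsRegEpi q₁) (eq₁ : dt ≫ q₁ = ct ≫ q₁)
    (hk₀ : IsKernelPair q₀ db cb) (w : q₁ ≫ fQ = fE ≫ q₀) :
    IsRegEpi (pullback.lift fE q₁ w.symm : E₁ ⟶ pullback q₀ fQ) := by
  obtain ⟨W₁, p₁, e, hp₁, he⟩ := hq₁.exists_cover (pullback.snd q₀ fQ)
  have hx : (p₁ ≫ pullback.fst q₀ fQ) ≫ q₀ = (e ≫ fE) ≫ q₀ := by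
    simp only [Category.assoc, pullback.condition, ← w, reassoc_of% he]
  let r := hk₀.lift _ _ hx
  obtain ⟨W₂, p₂, ρ, hp₂, hρ⟩ := hc.comparison.exists_cover
    (pullback.lift r e (hk₀.lift_snd _ _ hx))
  have hρ₁ : ρ ≫ fR = p₂ ≫ r := by
    simpa only [Category.assoc, pullback.lift_fst] using hρ =≫ pullback.fst cb fE
  have hρ₂ : ρ ≫ ct = p₂ ≫ e := by
    simpa only [Category.assoc, pullback.lift_snd] using hρ =≫ pullback.snd cb fE
  have key : p₂ ≫ p₁ = (ρ ≫ dt) ≫ pullback.lift fE q₁ w.symm := by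
    apply pullback.hom_ext
    · simp only [Category.assoc, pullback.lift_fst, hd, reassoc_of% hρ₁, r, hk₀.lift_fst]
    · simp only [Category.assoc, pullback.lift_snd, eq₁, reassoc_of% hρ₂, he]
  exact IsRegEpi.of_comp (ρ ≫ dt) (key ▸ hp₂.comp hp₁)

theorem isDoubleExt_of_isKernelPair (hd : dt ≫ fE = fR ≫ db)
    (hc : IsDoubleExt fR fE ct cb) (hq₁ : IsRegEpi q₁) (eq₁ : dt ≫ q₁ = ct ≫ q₁)
    (hq₀ : IsRegEpi q₀) (hk₀ : IsKernelPair q₀ db cb) (w : q₁ ≫ fQ = fE ≫ q₀) :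
    IsDoubleExt fE fQ q₁ q₀ where
  w := w
  left := hc.right
  right := IsRegEpi.of_comp q₁ (w ▸ hc.right.comp hq₀)
  top := hq₁
  bot := hq₀
  comparison := isRegEpi_comparison_of_isKernelPair hd hc hq₁ eq₁ hk₀ w

end Comparison

namespace ExtCat

theorem hom_ext {f g : ExtCat C} {φ ψ : f ⟶ g} (h₁ : homLeft φ = homLeft ψ)
    (h₀ : homRight φ = homRight ψ) : φ = ψ :=
  ObjectProperty.hom_ext _ (CommaMorphism.ext h₁ h₀)

def isColimitCoforkOfIsColimitComponents {f g h : ExtCat C} {d c : f ⟶ g} {π : g ⟶ h}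
    (w : d ≫ π = c ≫ π) (w₁ : homLeft d ≫ homLeft π = homLeft c ≫ homLeft π)
    (w₀ : homRight d ≫ homRight π = homRight c ≫ homRight π)
    (h₁ : IsColimit (Cofork.ofπ (homLeft π) w₁)) (h₀ : IsColimit (Cofork.ofπ (homRight π) w₀)) :
    IsColimit (Cofork.ofπ π w) :=
  Cofork.IsColimit.mk' _ fun s =>
    have hs₁ : homLeft d ≫ homLeft s.π = homLeft c ≫ homLeft s.π := congrArg homLeft s.condition
    have hs₀ : homRight d ≫ homRight s.π = homRight c ≫ homRight s.π :=
      congrArg homRight s.condition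
    let u₁ := Cofork.IsColimit.desc h₁ (homLeft s.π) hs₁
    let u₀ := Cofork.IsColimit.desc h₀ (homRight s.π) hs₀
    have hu₁ : homLeft π ≫ u₁ = homLeft s.π := Cofork.IsColimit.π_desc' h₁ _ _
    have hu₀ : homRight π ≫ u₀ = homRight s.π := Cofork.IsColimit.π_desc' h₀ _ _
    have hu : u₁ ≫ s.pt.obj.hom = h.obj.hom ≫ u₀ := Cofork.IsColimit.hom_ext h₁ <| by
      rw [Cofork.π_ofπ, reassoc_of% hu₁, hom_w, reassoc_of% (hom_w π), hu₀]
    ⟨ObjectProperty.homMk (Arrow.homMk (u := u₁) (v := u₀) hu), hom_ext hu₁ hu₀,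
      fun hm => hom_ext (Cofork.IsColimit.hom_ext h₁ ((congrArg homLeft hm).trans hu₁.symm))
        (Cofork.IsColimit.hom_ext h₀ ((congrArg homRight hm).trans hu₀.symm))⟩

end ExtCat

/-- In a Barr exact category, a parallel pair of double extensions which is a
componentwise kernel pair admits a coequalizer in `Ext C`, which is a double extension and
is computed componentwise. -/
theorem statement_4 {C : Type u} [Category.{v} C] [HasFiniteLimits C] [BarrExact C]
    {R₁ R₀ E₁ E₀ : C}
    (fR : R₁ ⟶ R₀) (fE : E₁ ⟶ E₀)
    (dt : R₁ ⟶ E₁) (db : R₀ ⟶ E₀) (ct : R₁ ⟶ E₁) (cb : R₀ ⟶ E₀)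
    (hd : IsDoubleExt fR fE dt db) (hc : IsDoubleExt fR fE ct cb)
    (htop : ∃ (Y : C) (q : E₁ ⟶ Y), IsKernelPair q dt ct)
    (hbot : ∃ (Y : C) (q : E₀ ⟶ Y), IsKernelPair q db cb) :
    ∃ (Q₁ Q₀ : C) (q₁ : E₁ ⟶ Q₁) (q₀ : E₀ ⟶ Q₀) (fQ : Q₁ ⟶ Q₀)
      (hq : IsDoubleExt fE fQ q₁ q₀)
      (eq : (ExtCat.homMk' (hf := hd.left) (hg := hd.right) dt db hd.w) ≫
              ExtCat.homMk' (hf := hd.right) (hg := hq.right) q₁ q₀ hq.w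
          = (ExtCat.homMk' (hf := hd.left) (hg := hd.right) ct cb hc.w) ≫
              ExtCat.homMk' q₁ q₀ hq.w)
      (eq₁ : dt ≫ q₁ = ct ≫ q₁) (eq₀ : db ≫ q₀ = cb ≫ q₀),
      -- the coequalizer of `d` and `c` in `Ext C` is `(q₁, q₀) : f_E ⟶ f_Q` ...
      Nonempty (IsColimit (Cofork.ofπ (ExtCat.homMk' (hf := hd.right) (hg := hq.right)
        q₁ q₀ hq.w) eq)) ∧
      -- ... and it is computed componentwise:
      Nonempty (IsColimit (Cofork.ofπ q₁ eq₁)) ∧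
      Nonempty (IsColimit (Cofork.ofπ q₀ eq₀)) := by
  obtain ⟨_, _, hkt⟩ := htop
  obtain ⟨_, _, hkb⟩ := hbot
  have := RegularCat.hasCoequalizer_of_isKernelPair hkt
  have := RegularCat.hasCoequalizer_of_isKernelPair hkb
  have eq₁ := coequalizer.condition dt ct
  have eq₀ := coequalizer.condition db cb
  have hco₁ := coequalizerIsCoequalizer dt ct
  have hco₀ := coequalizerIsCoequalizer db cb
  let fQ : coequalizer dt ct ⟶ coequalizer db cb :=
    coequalizer.desc (fE ≫ coequalizer.π db cb) <| by
      rw [reassoc_of% hd.w, eq₀, ← reassoc_of% hc.w]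
  have hq : IsDoubleExt fE fQ (coequalizer.π dt ct) (coequalizer.π db cb) :=
    isDoubleExt_of_isKernelPair hd.w hc ⟨coequalizerRegular dt ct⟩ eq₁
      ⟨coequalizerRegular db cb⟩ (IsKernelPair.of_isColimit_cofork hkb eq₀ hco₀)
      (coequalizer.π_desc _ _)
  exact ⟨_, _, _, _, fQ, hq, ExtCat.hom_ext eq₁ eq₀, eq₁, eq₀,
    ⟨ExtCat.isColimitCoforkOfIsColimitComponents _ eq₁ eq₀ hco₁ hco₀⟩, ⟨hco₁⟩, ⟨hco₀⟩⟩

end Paper
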